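/- Let φ ∈ Hom_S(L(2,P), S/L(2,P)). Then there exists φ' ∈ Hom_S(L(2,P), S/L(2,P)) with φ − φ' in the image of δ*, such that for every pair p ≤ q in P, φ'(p_1 q_2) is the class of a k-linear combination of monomials each of which is divisible neither by p_1 nor by q_2. -/

import Mathlib

set_option linter.unusedSectionVars false
set_option maxHeartbeats 1000000
set_option synthInstance.maxHeartbeats 400000
open scoped Classical

noncomputable section

namespace LP2

variable (k : Type) [Field k] (P : Type) [Fintype P] [PartialOrder P]

/-- The polynomial ring `S = k[x_{[2]×P}]`; `p₁ = X (0,p)` and `p₂ = X (1,p)`. -/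
abbrev SR := MvPolynomial (Fin 2 × P) k

/-- The quadratic letterplace ideal `L(2,P)`, generated by the monomials `p₁ q₂`
for all pairs `p ≤ q` in `P`. -/
def L2P : Ideal (SR k P) :=
  Ideal.span {f | ∃ p q : P, p ≤ q ∧
    f = MvPolynomial.X ((0 : Fin 2), p) * MvPolynomial.X ((1 : Fin 2), q)}

lemma gen_mem_L2P {p q : P} (h : p ≤ q) :
    MvPolynomial.X ((0 : Fin 2), p) * MvPolynomial.X ((1 : Fin 2), q) ∈ L2P k P :=
  Ideal.subset_span ⟨p, q, h, rfl⟩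


open MvPolynomial

lemma X_mul_X (v w : Fin 2 × P) :
    (X v * X w : SR k P) = monomial (Finsupp.single v 1 + Finsupp.single w 1) 1 := by
  rw [MvPolynomial.X, MvPolynomial.X, MvPolynomial.monomial_mul, one_mul]

lemma L2P_eq_span : L2P k P = Ideal.span
    ((fun s => MvPolynomial.monomial s (1:k)) ''
      {s : (Fin 2 × P) →₀ ℕ | ∃ p q : P, p ≤ q ∧
        s = Finsupp.single ((0:Fin 2), p) 1 + Finsupp.single ((1:Fin 2), q) 1}) := by
  unfold L2P
  congr 1
  ext f
  constructor
  · rintro ⟨p, q, hpq, rfl⟩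
    exact ⟨_, ⟨p, q, hpq, rfl⟩, (X_mul_X k P _ _).symm⟩
  · rintro ⟨s, ⟨p, q, hpq, rfl⟩, rfl⟩
    exact ⟨p, q, hpq, (X_mul_X k P _ _).symm⟩

lemma mem_L2P_iff {x : SR k P} : x ∈ L2P k P ↔
    ∀ m ∈ x.support, ∃ p q : P, p ≤ q ∧ m ((0:Fin 2), p) ≠ 0 ∧ m ((1:Fin 2), q) ≠ 0 := by
  rw [L2P_eq_span, MvPolynomial.mem_ideal_span_monomial_image]
  refine forall₂_congr fun m hm => ?_
  constructor
  · rintro ⟨s, ⟨p, q, hpq, rfl⟩, hle⟩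
    refine ⟨p, q, hpq, ?_, ?_⟩
    · have h := hle ((0:Fin 2), p)
      rw [Finsupp.add_apply, Finsupp.single_eq_same,
        Finsupp.single_eq_of_ne (by simp)] at h
      omega
    · have h := hle ((1:Fin 2), q)
      rw [Finsupp.add_apply, Finsupp.single_eq_same,
        Finsupp.single_eq_of_ne (by simp)] at h
      omega
  · rintro ⟨p, q, hpq, h0, h1⟩
    refine ⟨_, ⟨p, q, hpq, rfl⟩, fun i => ?_⟩
    rw [Finsupp.add_apply, Finsupp.single_apply, Finsupp.single_apply]
    by_cases hi : ((0:Fin 2), p) = i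
    · subst hi
      have hj : ¬ ((1:Fin 2), q) = ((0:Fin 2), p) := by simp
      simp only [if_pos rfl, if_neg hj, if_true]
      omega
    · by_cases hj : ((1:Fin 2), q) = i
      · subst hj
        simp only [if_neg hi, if_pos rfl, if_true]
        omega
      · simp only [if_neg hi, if_neg hj]
        omega


lemma coeff_X_mul_ne_zero {i : Fin 2 × P} {u : SR k P} {m : (Fin 2 × P) →₀ ℕ}
    (h : MvPolynomial.coeff m (MvPolynomial.X i * u) ≠ 0) :
    m i ≠ 0 ∧ MvPolynomial.coeff (m - Finsupp.single i 1) u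
      = MvPolynomial.coeff m (MvPolynomial.X i * u) := by
  rw [MvPolynomial.coeff_X_mul'] at h ⊢
  by_cases hi : i ∈ m.support
  · exact ⟨Finsupp.mem_support_iff.1 hi, (if_pos hi).symm⟩
  · exact absurd (if_neg hi) h

lemma step0 {p q : P} (hpq : p ≤ q) (u : SR k P)
    (hu : X ((0:Fin 2), q) * (X ((0:Fin 2), p) * u) ∈ L2P k P) :
    X ((0:Fin 2), p) * u ∈ L2P k P := by
  rw [mem_L2P_iff] at hu ⊢
  intro m hm
  have hcm := MvPolynomial.mem_support_iff.1 hm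
  have hm' : Finsupp.single ((0:Fin 2), q) 1 + m ∈
      (X ((0:Fin 2), q) * (X ((0:Fin 2), p) * u)).support := by
    rw [MvPolynomial.mem_support_iff, MvPolynomial.coeff_X_mul]
    exact hcm
  obtain ⟨r, s, hrs, h0, h1⟩ := hu _ hm'
  have hmp : m ((0:Fin 2), p) ≠ 0 := (coeff_X_mul_ne_zero k P hcm).1
  have hs : m ((1:Fin 2), s) ≠ 0 := by
    rw [Finsupp.add_apply, Finsupp.single_eq_of_ne (by simp)] at h1
    simpa using h1
  by_cases hr : m ((0:Fin 2), r) ≠ 0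
  · exact ⟨r, s, hrs, hr, hs⟩
  · rw [Finsupp.add_apply] at h0
    have : r = q := by
      by_contra hne
      rw [Finsupp.single_eq_of_ne' (by simp [Ne.symm hne]), zero_add] at h0
      exact hr h0
    exact ⟨p, s, hpq.trans (this ▸ hrs), hmp, hs⟩

lemma step1 {p q : P} (hpq : p ≤ q) (u : SR k P)
    (hu : X ((1:Fin 2), p) * (X ((1:Fin 2), q) * u) ∈ L2P k P) :
    X ((1:Fin 2), q) * u ∈ L2P k P := by
  rw [mem_L2P_iff] at hu ⊢
  intro m hm
  have hcm := MvPolynomial.mem_support_iff.1 hm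
  have hm' : Finsupp.single ((1:Fin 2), p) 1 + m ∈
      (X ((1:Fin 2), p) * (X ((1:Fin 2), q) * u)).support := by
    rw [MvPolynomial.mem_support_iff, MvPolynomial.coeff_X_mul]
    exact hcm
  obtain ⟨r, s, hrs, h0, h1⟩ := hu _ hm'
  have hmq : m ((1:Fin 2), q) ≠ 0 := (coeff_X_mul_ne_zero k P hcm).1
  have hr : m ((0:Fin 2), r) ≠ 0 := by
    rw [Finsupp.add_apply, Finsupp.single_eq_of_ne (by simp)] at h0
    simpa using h0
  by_cases hs : m ((1:Fin 2), s) ≠ 0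
  · exact ⟨r, s, hrs, hr, hs⟩
  · rw [Finsupp.add_apply] at h1
    have : s = p := by
      by_contra hne
      rw [Finsupp.single_eq_of_ne' (by simp [Ne.symm hne]), zero_add] at h1
      exact hs h1
    exact ⟨r, q, (this ▸ hrs).trans hpq, hr, hmq⟩

lemma cmod_zero {y : SR k P} {i j : Fin 2 × P} {s : (Fin 2 × P) →₀ ℕ}
    (h : s i ≠ 0 ∨ s j ≠ 0) :
    MvPolynomial.coeff s
      ((y.modMonomial (Finsupp.single i 1)).modMonomial (Finsupp.single j 1)) = 0 := by
  by_cases hj : Finsupp.single j 1 ≤ s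
  · exact MvPolynomial.coeff_modMonomial_of_le _ hj
  · rw [MvPolynomial.coeff_modMonomial_of_not_le _ hj]
    rcases h with h | h
    · exact MvPolynomial.coeff_modMonomial_of_le _
        (Finsupp.single_le_iff.2 (Nat.one_le_iff_ne_zero.2 h))
    · exact absurd (Finsupp.single_le_iff.2 (Nat.one_le_iff_ne_zero.2 h)) hj

lemma key {p q : P} (hpq : p ≤ q) (g gq gp : SR k P)
    (h1 : X ((0:Fin 2), q) * g - X ((0:Fin 2), p) * gq ∈ L2P k P)
    (h2 : X ((1:Fin 2), p) * g - X ((1:Fin 2), q) * gp ∈ L2P k P) :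
    ∃ c : SR k P,
      (∀ m ∈ c.support, m ((0:Fin 2), p) = 0 ∧ m ((1:Fin 2), q) = 0) ∧
      g - (X ((0:Fin 2), p) * (gq.divMonomial (Finsupp.single ((0:Fin 2), q) 1))
         + X ((1:Fin 2), q) * (gp.divMonomial (Finsupp.single ((1:Fin 2), p) 1))) - c
        ∈ L2P k P := by
  set Aq := gq.divMonomial (Finsupp.single ((0:Fin 2), q) 1) with hAq
  set Rq := gq.modMonomial (Finsupp.single ((0:Fin 2), q) 1) with hRq
  set Bp := gp.divMonomial (Finsupp.single ((1:Fin 2), p) 1) with hBp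
  set Rp := gp.modMonomial (Finsupp.single ((1:Fin 2), p) 1) with hRp
  set a := g.divMonomial (Finsupp.single ((0:Fin 2), p) 1) with ha
  set g' := g.modMonomial (Finsupp.single ((0:Fin 2), p) 1) with hg'
  set b := g'.divMonomial (Finsupp.single ((1:Fin 2), q) 1) with hb
  set c := g'.modMonomial (Finsupp.single ((1:Fin 2), q) 1) with hc
  have t1 : X ((1:Fin 2), q) * b + c = g' := by
    rw [hb, hc]; exact MvPolynomial.divMonomial_add_modMonomial_single g' _
  have hg : g = X ((0:Fin 2), p) * a + (X ((1:Fin 2), q) * b + c) := by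
    rw [t1, ha, hg']
    exact (MvPolynomial.divMonomial_add_modMonomial_single g _).symm
  have hgq : gq = X ((0:Fin 2), q) * Aq + Rq := by
    rw [hAq, hRq]
    exact (MvPolynomial.divMonomial_add_modMonomial_single gq _).symm
  have hgp : gp = X ((1:Fin 2), p) * Bp + Rp := by
    rw [hBp, hRp]
    exact (MvPolynomial.divMonomial_add_modMonomial_single gp _).symm
  have hc0 : ∀ s : (Fin 2 × P) →₀ ℕ,
      (s ((0:Fin 2), p) ≠ 0 ∨ s ((1:Fin 2), q) ≠ 0) → MvPolynomial.coeff s c = 0 := by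
    intro s hs
    rw [hc, hg']
    exact cmod_zero k P hs
  have hRq0 : ∀ s : (Fin 2 × P) →₀ ℕ, s ((0:Fin 2), q) ≠ 0 → MvPolynomial.coeff s Rq = 0 := by
    intro s hs
    exact MvPolynomial.coeff_modMonomial_of_le _
      (Finsupp.single_le_iff.2 (Nat.one_le_iff_ne_zero.2 hs))
  have hRp0 : ∀ s : (Fin 2 × P) →₀ ℕ, s ((1:Fin 2), p) ≠ 0 → MvPolynomial.coeff s Rp = 0 := by
    intro s hs
    exact MvPolynomial.coeff_modMonomial_of_le _
      (Finsupp.single_le_iff.2 (Nat.one_le_iff_ne_zero.2 hs))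
  -- Claim A
  have claimA : X ((0:Fin 2), p) * (a - Aq) ∈ L2P k P := by
    apply step0 k P hpq
    have hexp : X ((0:Fin 2), q) * (X ((0:Fin 2), p) * (a - Aq))
        = (X ((0:Fin 2), q) * g - X ((0:Fin 2), p) * gq
            - X ((0:Fin 2), q) * X ((1:Fin 2), q) * b)
          + (X ((0:Fin 2), p) * Rq - X ((0:Fin 2), q) * c) := by
      rw [hg, hgq]; ring
    have hmemA : (X ((0:Fin 2), q) * g - X ((0:Fin 2), p) * gq
        - X ((0:Fin 2), q) * X ((1:Fin 2), q) * b) ∈ L2P k P :=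
      Submodule.sub_mem _ h1 (Ideal.mul_mem_right _ _ (gen_mem_L2P k P (le_refl q)))
    rw [mem_L2P_iff]
    intro m hm
    have hcm := MvPolynomial.mem_support_iff.1 hm
    obtain ⟨hq1, heq1⟩ := coeff_X_mul_ne_zero k P hcm
    have hcm2 : MvPolynomial.coeff (m - Finsupp.single ((0:Fin 2), q) 1)
        (X ((0:Fin 2), p) * (a - Aq)) ≠ 0 := by rw [heq1]; exact hcm
    have hp1 := (coeff_X_mul_ne_zero k P hcm2).1
    rw [Finsupp.tsub_apply, Finsupp.single_apply] at hp1
    have hfacts : 1 ≤ m ((0:Fin 2), p) ∧ 1 ≤ m ((0:Fin 2), q) ∧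
        (p = q → 2 ≤ m ((0:Fin 2), p)) := by
      have hmq : 1 ≤ m ((0:Fin 2), q) := Nat.one_le_iff_ne_zero.2 hq1
      by_cases hpq' : p = q
      · subst hpq'
        rw [if_pos rfl] at hp1
        exact ⟨by omega, hmq, fun _ => by omega⟩
      · rw [if_neg (by simp [Ne.symm hpq'])] at hp1
        exact ⟨by omega, hmq, fun h => absurd h hpq'⟩
    obtain ⟨hf1, hf2, hf3⟩ := hfacts
    have cw1 : MvPolynomial.coeff m (X ((0:Fin 2), p) * Rq) = 0 := by
      rw [MvPolynomial.coeff_X_mul']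
      split_ifs with h
      · apply hRq0
        rw [Finsupp.tsub_apply, Finsupp.single_apply]
        by_cases hpq' : p = q
        · subst hpq'
          rw [if_pos rfl]
          have := hf3 rfl
          omega
        · rw [if_neg (by simp [hpq'])]
          omega
      · rfl
    have cw2 : MvPolynomial.coeff m (X ((0:Fin 2), q) * c) = 0 := by
      rw [MvPolynomial.coeff_X_mul']
      split_ifs with h
      · apply hc0
        left
        rw [Finsupp.tsub_apply, Finsupp.single_apply]
        by_cases hpq' : p = q
        · subst hpq'
          rw [if_pos rfl]
          have := hf3 rfl
          omega
        · rw [if_neg (by simp [Ne.symm hpq'])]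
          omega
      · rfl
    have hval : MvPolynomial.coeff m (X ((0:Fin 2), q) * g - X ((0:Fin 2), p) * gq
        - X ((0:Fin 2), q) * X ((1:Fin 2), q) * b) ≠ 0 := by
      have h' := hcm
      rw [hexp] at h'
      simp only [MvPolynomial.coeff_add, MvPolynomial.coeff_sub, cw1, cw2, sub_zero,
        add_zero] at h'
      simpa [MvPolynomial.coeff_sub] using h'
    exact (mem_L2P_iff k P).1 hmemA m (MvPolynomial.mem_support_iff.2 hval)
  -- Claim B
  have claimB : X ((1:Fin 2), q) * (b - Bp) ∈ L2P k P := by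
    apply step1 k P hpq
    have hexp : X ((1:Fin 2), p) * (X ((1:Fin 2), q) * (b - Bp))
        = (X ((1:Fin 2), p) * g - X ((1:Fin 2), q) * gp
            - X ((0:Fin 2), p) * X ((1:Fin 2), p) * a)
          + (X ((1:Fin 2), q) * Rp - X ((1:Fin 2), p) * c) := by
      rw [hg, hgp]; ring
    have hmemB : (X ((1:Fin 2), p) * g - X ((1:Fin 2), q) * gp
        - X ((0:Fin 2), p) * X ((1:Fin 2), p) * a) ∈ L2P k P :=
      Submodule.sub_mem _ h2 (Ideal.mul_mem_right _ _ (gen_mem_L2P k P (le_refl p)))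
    rw [mem_L2P_iff]
    intro m hm
    have hcm := MvPolynomial.mem_support_iff.1 hm
    obtain ⟨hq1, heq1⟩ := coeff_X_mul_ne_zero k P hcm
    have hcm2 : MvPolynomial.coeff (m - Finsupp.single ((1:Fin 2), p) 1)
        (X ((1:Fin 2), q) * (b - Bp)) ≠ 0 := by rw [heq1]; exact hcm
    have hp1 := (coeff_X_mul_ne_zero k P hcm2).1
    have hp1' := hp1
    rw [Finsupp.tsub_apply, Finsupp.single_apply] at hp1'
    have hfacts : 1 ≤ m ((1:Fin 2), p) ∧ 1 ≤ m ((1:Fin 2), q) ∧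
        (p = q → 2 ≤ m ((1:Fin 2), q)) := by
      have hmp : 1 ≤ m ((1:Fin 2), p) := Nat.one_le_iff_ne_zero.2 hq1
      by_cases hpq' : p = q
      · subst hpq'
        rw [if_pos rfl] at hp1'
        exact ⟨hmp, by omega, fun _ => by omega⟩
      · rw [if_neg (by simp [hpq'])] at hp1'
        exact ⟨hmp, by omega, fun h => absurd h hpq'⟩
    obtain ⟨hf1, hf2, hf3⟩ := hfacts
    have cw1 : MvPolynomial.coeff m (X ((1:Fin 2), q) * Rp) = 0 := by
      rw [MvPolynomial.coeff_X_mul']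
      split_ifs with h
      · apply hRp0
        rw [Finsupp.tsub_apply, Finsupp.single_apply]
        by_cases hpq' : p = q
        · subst hpq'
          rw [if_pos rfl]
          have := hf3 rfl
          omega
        · rw [if_neg (by simp [Ne.symm hpq'])]
          omega
      · rfl
    have cw2 : MvPolynomial.coeff m (X ((1:Fin 2), p) * c) = 0 := by
      rw [MvPolynomial.coeff_X_mul']
      split_ifs with h
      · exact hc0 _ (Or.inr hp1)
      · rfl
    have hval : MvPolynomial.coeff m (X ((1:Fin 2), p) * g - X ((1:Fin 2), q) * gp
        - X ((0:Fin 2), p) * X ((1:Fin 2), p) * a) ≠ 0 := by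
      have h' := hcm
      rw [hexp] at h'
      simp only [MvPolynomial.coeff_add, MvPolynomial.coeff_sub, cw1, cw2, sub_zero,
        add_zero] at h'
      simpa [MvPolynomial.coeff_sub] using h'
    exact (mem_L2P_iff k P).1 hmemB m (MvPolynomial.mem_support_iff.2 hval)
  refine ⟨c, fun m hm => ?_, ?_⟩
  · have hcm := MvPolynomial.mem_support_iff.1 hm
    constructor
    · by_contra hne
      exact hcm (hc0 m (Or.inl hne))
    · by_contra hne
      exact hcm (hc0 m (Or.inr hne))
  · have heq : g - (X ((0:Fin 2), p) * Aq + X ((1:Fin 2), q) * Bp) - c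
        = X ((0:Fin 2), p) * (a - Aq) + X ((1:Fin 2), q) * (b - Bp) := by
      rw [hg]; ring
    rw [heq]
    exact Submodule.add_mem _ claimA claimB

/-- Every `φ ∈ Hom_S(L(2,P), S/L(2,P))` is, modulo the image of
`δ* : Der_k(S) → Hom_S(L(2,P), S/L(2,P))`, equal to a homomorphism `φ'` such that for
every `p ≤ q`, `φ'(p₁q₂)` is the class of a `k`-linear combination of monomials none of
which is divisible by `p₁` or by `q₂`. -/
theorem normalize_hom
    (φ : (L2P k P : Submodule (SR k P) (SR k P)) →ₗ[SR k P] (SR k P ⧸ L2P k P)) :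
    ∃ φ' : (L2P k P : Submodule (SR k P) (SR k P)) →ₗ[SR k P] (SR k P ⧸ L2P k P),
      (∃ d : Derivation k (SR k P) (SR k P),
        ∀ (f : SR k P) (hf : f ∈ L2P k P),
          φ ⟨f, hf⟩ - φ' ⟨f, hf⟩ = Ideal.Quotient.mk (L2P k P) (d f)) ∧
      ∀ (p q : P) (h : p ≤ q), ∃ g : SR k P,
        φ' ⟨MvPolynomial.X ((0 : Fin 2), p) * MvPolynomial.X ((1 : Fin 2), q),
            gen_mem_L2P k P h⟩ = Ideal.Quotient.mk (L2P k P) g ∧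
        ∀ m ∈ g.support, m ((0 : Fin 2), p) = 0 ∧ m ((1 : Fin 2), q) = 0 := by
  classical
  have hsur : Function.Surjective (Ideal.Quotient.mk (L2P k P)) :=
    Ideal.Quotient.mk_surjective
  choose rep hrep using hsur
  have mksmul : ∀ (r x : SR k P),
      r • (Ideal.Quotient.mk (L2P k P) x) = Ideal.Quotient.mk (L2P k P) (r * x) :=
    fun r x => (Submodule.Quotient.mk_smul (L2P k P) r x).symm
  have φsmul : ∀ (r f : SR k P) (hf : f ∈ L2P k P),
      φ ⟨r * f, Ideal.mul_mem_left _ r hf⟩ = r • φ ⟨f, hf⟩ := by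
    intro r f hf
    rw [← map_smul]
    congr 1
  set gd : P → SR k P := fun r =>
    rep (φ ⟨X ((0:Fin 2), r) * X ((1:Fin 2), r), gen_mem_L2P k P (le_refl r)⟩) with hgd
  set v : Fin 2 × P → SR k P := fun x =>
    if x.1 = 0 then (gd x.2).divMonomial (Finsupp.single ((1:Fin 2), x.2) 1)
    else (gd x.2).divMonomial (Finsupp.single ((0:Fin 2), x.2) 1) with hv
  set d := MvPolynomial.mkDerivation k v with hd
  set ψ : (L2P k P : Submodule (SR k P) (SR k P)) →ₗ[SR k P] (SR k P ⧸ L2P k P) :=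
    { toFun := fun x => Ideal.Quotient.mk (L2P k P) (d (x : SR k P))
      map_add' := fun x y => by
        simp only [Submodule.coe_add, map_add]
      map_smul' := fun r x => by
        simp only [RingHom.id_apply]
        have hx : ((r • x : (L2P k P : Submodule (SR k P) (SR k P))) : SR k P)
            = r * (x : SR k P) := rfl
        rw [hx, Derivation.leibniz, smul_eq_mul, smul_eq_mul,
          RingHom.map_add (Ideal.Quotient.mk (L2P k P)), ← mksmul,
          Ideal.Quotient.eq_zero_iff_mem.2 (Ideal.mul_mem_right _ _ x.2), add_zero] } with hψ
  refine ⟨φ - ψ, ⟨d, fun f hf => ?_⟩, fun p q hpq => ?_⟩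
  · rw [LinearMap.sub_apply, sub_sub_cancel, hψ]
    rfl
  · set gpq := rep (φ ⟨X ((0:Fin 2), p) * X ((1:Fin 2), q), gen_mem_L2P k P hpq⟩) with hgpq
    have hmkq : Ideal.Quotient.mk (L2P k P) (gd q)
        = φ ⟨X ((0:Fin 2), q) * X ((1:Fin 2), q), gen_mem_L2P k P (le_refl q)⟩ := hrep _
    have hmkp : Ideal.Quotient.mk (L2P k P) (gd p)
        = φ ⟨X ((0:Fin 2), p) * X ((1:Fin 2), p), gen_mem_L2P k P (le_refl p)⟩ := hrep _
    have hmkpq : Ideal.Quotient.mk (L2P k P) gpq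
        = φ ⟨X ((0:Fin 2), p) * X ((1:Fin 2), q), gen_mem_L2P k P hpq⟩ := hrep _
    have rel1 : X ((0:Fin 2), q) * gpq - X ((0:Fin 2), p) * gd q ∈ L2P k P := by
      rw [← Ideal.Quotient.eq]
      calc Ideal.Quotient.mk (L2P k P) (X ((0:Fin 2), q) * gpq)
          = X ((0:Fin 2), q) • Ideal.Quotient.mk (L2P k P) gpq := (mksmul _ _).symm
        _ = X ((0:Fin 2), q) • φ ⟨X ((0:Fin 2), p) * X ((1:Fin 2), q),
              gen_mem_L2P k P hpq⟩ := by rw [hmkpq]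
        _ = φ ⟨X ((0:Fin 2), q) * (X ((0:Fin 2), p) * X ((1:Fin 2), q)),
              Ideal.mul_mem_left _ _ (gen_mem_L2P k P hpq)⟩ := (φsmul _ _ _).symm
        _ = φ ⟨X ((0:Fin 2), p) * (X ((0:Fin 2), q) * X ((1:Fin 2), q)),
              Ideal.mul_mem_left _ _ (gen_mem_L2P k P (le_refl q))⟩ := by
            congr 1
            exact Subtype.ext (by ring)
        _ = X ((0:Fin 2), p) • φ ⟨X ((0:Fin 2), q) * X ((1:Fin 2), q),
              gen_mem_L2P k P (le_refl q)⟩ := φsmul _ _ _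
        _ = X ((0:Fin 2), p) • Ideal.Quotient.mk (L2P k P) (gd q) := by rw [hmkq]
        _ = Ideal.Quotient.mk (L2P k P) (X ((0:Fin 2), p) * gd q) := mksmul _ _
    have rel2 : X ((1:Fin 2), p) * gpq - X ((1:Fin 2), q) * gd p ∈ L2P k P := by
      rw [← Ideal.Quotient.eq]
      calc Ideal.Quotient.mk (L2P k P) (X ((1:Fin 2), p) * gpq)
          = X ((1:Fin 2), p) • Ideal.Quotient.mk (L2P k P) gpq := (mksmul _ _).symm
        _ = X ((1:Fin 2), p) • φ ⟨X ((0:Fin 2), p) * X ((1:Fin 2), q),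
              gen_mem_L2P k P hpq⟩ := by rw [hmkpq]
        _ = φ ⟨X ((1:Fin 2), p) * (X ((0:Fin 2), p) * X ((1:Fin 2), q)),
              Ideal.mul_mem_left _ _ (gen_mem_L2P k P hpq)⟩ := (φsmul _ _ _).symm
        _ = φ ⟨X ((1:Fin 2), q) * (X ((0:Fin 2), p) * X ((1:Fin 2), p)),
              Ideal.mul_mem_left _ _ (gen_mem_L2P k P (le_refl p))⟩ := by
            congr 1
            exact Subtype.ext (by ring)
        _ = X ((1:Fin 2), q) • φ ⟨X ((0:Fin 2), p) * X ((1:Fin 2), p),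
              gen_mem_L2P k P (le_refl p)⟩ := φsmul _ _ _
        _ = X ((1:Fin 2), q) • Ideal.Quotient.mk (L2P k P) (gd p) := by rw [hmkp]
        _ = Ideal.Quotient.mk (L2P k P) (X ((1:Fin 2), q) * gd p) := mksmul _ _
    obtain ⟨c, hcsupp, hmem⟩ := key k P hpq gpq (gd q) (gd p) rel1 rel2
    refine ⟨c, ?_, hcsupp⟩
    have hdgen : d (X ((0:Fin 2), p) * X ((1:Fin 2), q))
        = X ((0:Fin 2), p) * ((gd q).divMonomial (Finsupp.single ((0:Fin 2), q) 1))
        + X ((1:Fin 2), q) * ((gd p).divMonomial (Finsupp.single ((1:Fin 2), p) 1)) := by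
      rw [hd, Derivation.leibniz, MvPolynomial.mkDerivation_X, MvPolynomial.mkDerivation_X,
        smul_eq_mul, smul_eq_mul, hv]
      norm_num
    have hφψ : (φ - ψ) ⟨X ((0:Fin 2), p) * X ((1:Fin 2), q), gen_mem_L2P k P hpq⟩
        = Ideal.Quotient.mk (L2P k P)
            (gpq - d (X ((0:Fin 2), p) * X ((1:Fin 2), q))) := by
      rw [LinearMap.sub_apply, map_sub, ← hmkpq, hψ]
      rfl
    rw [hφψ, Ideal.Quotient.eq, hdgen]
    exact hmem

end LP2
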